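/- Let T and S be A-bounded operators on H admitting A-adjoints (i.e. there exist Ts, Ss with A∘Ts = T*∘A and A∘Ss = S*∘A). Then w_𝔸([[T,S],[T,S]]) ≤ w_A(T+S) + (1/2)·‖T−S‖_A. -/

import Mathlib

/-! For `x = (u, v)` put `w = u + v` and `d = u - v`. Then `⟨[[T,S],[T,S]] x, x⟩_𝔸 = ⟨T u + S v, w⟩_A`
and `2 (T u + S v) = (T + S) w + (T - S) d`, so `2 |⟨[[T,S],[T,S]] x, x⟩_𝔸|` is at most
`w_A(T + S) ‖w‖_A² + ‖T - S‖_A ‖d‖_A ‖w‖_A`. By the parallelogram law `‖w‖_A² + ‖d‖_A² = 2 ‖x‖_𝔸²`,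
which bounds both `‖w‖_A²` and `2 ‖d‖_A ‖w‖_A` by `2 ‖x‖_𝔸²`. -/

noncomputable def sInner {E : Type*} [NormedAddCommGroup E] [InnerProductSpace ℂ E]
    (A : E →L[ℂ] E) (x y : E) : ℂ := inner ℂ (A x) y

noncomputable def sNorm {E : Type*} [NormedAddCommGroup E] [InnerProductSpace ℂ E]
    (A : E →L[ℂ] E) (x : E) : ℝ := Real.sqrt (sInner A x x).re

/-- The `A`-operator seminorm. -/
noncomputable def opSNorm {E : Type*} [NormedAddCommGroup E] [InnerProductSpace ℂ E]
    (A T : E →L[ℂ] E) : ℝ := sSup {c | ∃ x : E, sNorm A x = 1 ∧ c = sNorm A (T x)}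

/-- The `A`-numerical radius. -/
noncomputable def numRad {E : Type*} [NormedAddCommGroup E] [InnerProductSpace ℂ E]
    (A T : E →L[ℂ] E) : ℝ := sSup {c | ∃ x : E, sNorm A x = 1 ∧ c = ‖sInner A (T x) x‖}

/-- `T` is `A`-bounded. -/
def ABounded {E : Type*} [NormedAddCommGroup E] [InnerProductSpace ℂ E]
    (A T : E →L[ℂ] E) : Prop := ∃ c > 0, ∀ x : E, sNorm A (T x) ≤ c * sNorm A x

/-- The 2×2 block operator `[[T, X], [Y, S]]` on `H ⊕ H` (with the ℓ² product structure). -/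
noncomputable def blk {H : Type*} [NormedAddCommGroup H] [InnerProductSpace ℂ H]
    (T X Y S : H →L[ℂ] H) : WithLp 2 (H × H) →L[ℂ] WithLp 2 (H × H) :=
  ((WithLp.prodContinuousLinearEquiv 2 ℂ H H).symm.toContinuousLinearMap.comp
    (((T.coprod X).prod (Y.coprod S)).comp
      (WithLp.prodContinuousLinearEquiv 2 ℂ H H).toContinuousLinearMap))

/-- The diagonal operator `𝔸 = diag(A, A)` on `H ⊕ H`. -/
noncomputable def twoA {H : Type*} [NormedAddCommGroup H] [InnerProductSpace ℂ H]
    (A : H →L[ℂ] H) : WithLp 2 (H × H) →L[ℂ] WithLp 2 (H × H) := blk A 0 0 A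

section SemiInner

variable {E : Type*} [NormedAddCommGroup E] [InnerProductSpace ℂ E] {A : E →L[ℂ] E}

/-- Makes the Cauchy–Schwarz and triangle inequalities of `PreInnerProductSpace.Core`
available for `⟨A ·, ·⟩`. -/
noncomputable abbrev ContinuousLinearMap.IsPositive.preInnerProductSpaceCore (hA : A.IsPositive) :
    PreInnerProductSpace.Core ℂ E where
  inner := sInner A
  conj_inner_symm x y := by simp only [sInner, inner_conj_symm, hA.inner_left_eq_inner_right]
  re_inner_nonneg := hA.re_inner_nonneg_left
  add_left x y z := by simp only [sInner, map_add, inner_add_left]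
  smul_left x y r := by simp only [sInner, map_smul, inner_smul_left]

theorem sNorm_nonneg (x : E) : 0 ≤ sNorm A x := Real.sqrt_nonneg _

theorem sq_sNorm (hA : A.IsPositive) (x : E) : sNorm A x ^ 2 = (sInner A x x).re :=
  Real.sq_sqrt (hA.re_inner_nonneg_left x)

theorem norm_sInner_le (hA : A.IsPositive) (x y : E) :
    ‖sInner A x y‖ ≤ sNorm A x * sNorm A y :=
  InnerProductSpace.Core.norm_inner_le_norm (c := hA.preInnerProductSpaceCore) x y

theorem sNorm_add_le (hA : A.IsPositive) (x y : E) :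
    sNorm A (x + y) ≤ sNorm A x + sNorm A y :=
  letI := InnerProductSpace.Core.toSeminormedAddCommGroup (c := hA.preInnerProductSpaceCore)
  norm_add_le x y

theorem sNorm_smul (c : ℂ) (x : E) : sNorm A (c • x) = ‖c‖ * sNorm A x := by
  rw [sNorm, sNorm, sInner, map_smul, inner_smul_left, inner_smul_right, ← mul_assoc,
    Complex.conj_mul', ← Complex.ofReal_pow, Complex.re_ofReal_mul, Real.sqrt_mul (sq_nonneg _),
    Real.sqrt_sq (norm_nonneg _)]
  rfl

theorem sNorm_neg (x : E) : sNorm A (-x) = sNorm A x := by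
  simpa using sNorm_smul (A := A) (-1) x

end SemiInner

section ABounded

variable {E : Type*} [NormedAddCommGroup E] [InnerProductSpace ℂ E] {A X Y : E →L[ℂ] E}

theorem ABounded.add (hA : A.IsPositive) (hX : ABounded A X) (hY : ABounded A Y) :
    ABounded A (X + Y) := by
  obtain ⟨c, hc, hXc⟩ := hX
  obtain ⟨d, hd, hYd⟩ := hY
  refine ⟨c + d, add_pos hc hd, fun x => ?_⟩
  calc sNorm A (X x + Y x) ≤ sNorm A (X x) + sNorm A (Y x) := sNorm_add_le hA _ _
    _ ≤ c * sNorm A x + d * sNorm A x := add_le_add (hXc x) (hYd x)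
    _ = (c + d) * sNorm A x := by ring

theorem ABounded.neg (hX : ABounded A X) : ABounded A (-X) := by
  obtain ⟨c, hc, hXc⟩ := hX
  exact ⟨c, hc, fun x => (sNorm_neg (X x)).trans_le (hXc x)⟩

theorem ABounded.sub (hA : A.IsPositive) (hX : ABounded A X) (hY : ABounded A Y) :
    ABounded A (X - Y) :=
  sub_eq_add_neg X Y ▸ hX.add hA hY.neg

theorem numRad_bddAbove (hA : A.IsPositive) (hX : ABounded A X) :
    BddAbove {c | ∃ x : E, sNorm A x = 1 ∧ c = ‖sInner A (X x) x‖} := by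
  obtain ⟨c, -, hXc⟩ := hX
  refine ⟨c, ?_⟩
  rintro _ ⟨x, hx, rfl⟩
  calc ‖sInner A (X x) x‖ ≤ sNorm A (X x) * sNorm A x := norm_sInner_le hA _ _
    _ ≤ c * sNorm A x * sNorm A x := mul_le_mul_of_nonneg_right (hXc x) (sNorm_nonneg x)
    _ = c := by rw [hx, mul_one, mul_one]

theorem opSNorm_bddAbove (hX : ABounded A X) :
    BddAbove {c | ∃ x : E, sNorm A x = 1 ∧ c = sNorm A (X x)} := by
  obtain ⟨c, -, hXc⟩ := hX
  refine ⟨c, ?_⟩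
  rintro _ ⟨x, hx, rfl⟩
  simpa [hx] using hXc x

theorem numRad_nonneg : 0 ≤ numRad A X :=
  Real.sSup_nonneg (by rintro _ ⟨x, -, rfl⟩; exact norm_nonneg _)

theorem opSNorm_nonneg : 0 ≤ opSNorm A X :=
  Real.sSup_nonneg (by rintro _ ⟨x, -, rfl⟩; exact sNorm_nonneg _)

theorem sNorm_inv_smul_self {x : E} (hx : sNorm A x ≠ 0) :
    sNorm A (((sNorm A x)⁻¹ : ℝ) • x) = 1 := by
  rw [← Complex.coe_smul, sNorm_smul, Complex.norm_real, Real.norm_eq_abs,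
    abs_of_nonneg (inv_nonneg.2 (sNorm_nonneg x)), inv_mul_cancel₀ hx]

theorem norm_sInner_le_numRad_mul (hA : A.IsPositive) (hX : ABounded A X) (x : E) :
    ‖sInner A (X x) x‖ ≤ numRad A X * sNorm A x ^ 2 := by
  rcases eq_or_ne (sNorm A x) 0 with hx | hx
  · simpa [hx] using norm_sInner_le hA (X x) x
  set t := sNorm A x
  have ht : 0 < t := (sNorm_nonneg x).lt_of_ne' hx
  have hy := le_csSup (numRad_bddAbove hA hX) ⟨_, sNorm_inv_smul_self hx, rfl⟩
  have hscale : ‖sInner A (X ((t⁻¹ : ℝ) • x)) ((t⁻¹ : ℝ) • x)‖ = t⁻¹ ^ 2 * ‖sInner A (X x) x‖ := by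
    simp only [← Complex.coe_smul, map_smul, sInner, inner_smul_left, inner_smul_right,
      Complex.conj_ofReal, norm_mul, Complex.norm_real, Real.norm_eq_abs, abs_of_pos (inv_pos.2 ht)]
    ring
  rw [hscale, inv_pow, ← div_eq_inv_mul, div_le_iff₀ (by positivity)] at hy
  exact hy

theorem sNorm_le_opSNorm_mul (hX : ABounded A X) (x : E) :
    sNorm A (X x) ≤ opSNorm A X * sNorm A x := by
  rcases eq_or_ne (sNorm A x) 0 with hx | hx
  · obtain ⟨c, -, hXc⟩ := hX
    simpa [hx] using hXc x
  set t := sNorm A x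
  have ht : 0 < t := (sNorm_nonneg x).lt_of_ne' hx
  have hy := le_csSup (opSNorm_bddAbove hX) ⟨_, sNorm_inv_smul_self hx, rfl⟩
  rw [← Complex.coe_smul, map_smul, sNorm_smul, Complex.norm_real, Real.norm_eq_abs,
    abs_of_pos (inv_pos.2 ht), ← div_eq_inv_mul, div_le_iff₀ ht] at hy
  exact hy

end ABounded

section Block

variable {H : Type*} [NormedAddCommGroup H] [InnerProductSpace ℂ H] {A : H →L[ℂ] H}

theorem sInner_twoA (x y : WithLp 2 (H × H)) :
    sInner (twoA A) x y = sInner A x.fst y.fst + sInner A x.snd y.snd := by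
  simp [twoA, blk, sInner, WithLp.prod_inner_apply]

theorem sq_sNorm_twoA (hA : A.IsPositive) (x : WithLp 2 (H × H)) :
    sNorm (twoA A) x ^ 2 = sNorm A x.fst ^ 2 + sNorm A x.snd ^ 2 := by
  rw [sq_sNorm hA, sq_sNorm hA, sNorm, sInner_twoA, Complex.add_re]
  exact Real.sq_sqrt (add_nonneg (hA.re_inner_nonneg_left _) (hA.re_inner_nonneg_left _))

theorem sInner_twoA_blk_self (T S : H →L[ℂ] H) (x : WithLp 2 (H × H)) :
    sInner (twoA A) (blk T S T S x) x = sInner A (T x.fst + S x.snd) (x.fst + x.snd) := by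
  rw [sInner_twoA]
  simp [blk, sInner]

theorem parallelogram_law_with_sNorm (hA : A.IsPositive) (u v : H) :
    sNorm A (u + v) ^ 2 + sNorm A (u - v) ^ 2 = 2 * (sNorm A u ^ 2 + sNorm A v ^ 2) := by
  simp only [sq_sNorm hA, sInner, map_add, map_sub, inner_add_left, inner_add_right,
    inner_sub_left, inner_sub_right, Complex.add_re, Complex.sub_re]
  ring

theorem two_mul_norm_sInner_apply_add_apply_le (hA : A.IsPositive) {T S : H →L[ℂ] H}
    (hT : ABounded A T) (hS : ABounded A S) (u v : H) :
    2 * ‖sInner A (T u + S v) (u + v)‖ ≤ numRad A (T + S) * sNorm A (u + v) ^ 2 +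
      opSNorm A (T - S) * sNorm A (u - v) * sNorm A (u + v) := by
  set w := u + v
  set d := u - v
  have hdecomp : (2 : ℂ) • (T u + S v) = (T + S) w + (T - S) d := by
    simp only [w, d, add_apply, sub_apply, map_add, map_sub]
    module
  have hsplit : 2 * sInner A (T u + S v) w = sInner A ((T + S) w) w + sInner A ((T - S) d) w := by
    rw [sInner, sInner, sInner, ← inner_add_left, ← map_add, ← hdecomp, map_smul,
      inner_smul_left, map_ofNat]
  have hsum : ‖sInner A ((T + S) w) w‖ ≤ numRad A (T + S) * sNorm A w ^ 2 :=
    norm_sInner_le_numRad_mul hA (hT.add hA hS) w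
  have hdiff : ‖sInner A ((T - S) d) w‖ ≤ opSNorm A (T - S) * sNorm A d * sNorm A w :=
    (norm_sInner_le hA _ _).trans
      (mul_le_mul_of_nonneg_right (sNorm_le_opSNorm_mul (hT.sub hA hS) d) (sNorm_nonneg w))
  calc 2 * ‖sInner A (T u + S v) w‖ = ‖2 * sInner A (T u + S v) w‖ := by simp
    _ ≤ ‖sInner A ((T + S) w) w‖ + ‖sInner A ((T - S) d) w‖ := hsplit ▸ norm_add_le _ _
    _ ≤ _ := add_le_add hsum hdiff

theorem norm_sInner_twoA_blk_le (hA : A.IsPositive) {T S : H →L[ℂ] H}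
    (hT : ABounded A T) (hS : ABounded A S) (x : WithLp 2 (H × H)) :
    ‖sInner (twoA A) (blk T S T S x) x‖ ≤
      (numRad A (T + S) + 1 / 2 * opSNorm A (T - S)) * sNorm (twoA A) x ^ 2 := by
  have hbound := two_mul_norm_sInner_apply_add_apply_le hA hT hS x.fst x.snd
  have hpar := parallelogram_law_with_sNorm hA x.fst x.snd
  have ha : 0 ≤ numRad A (T + S) := numRad_nonneg
  have hb : 0 ≤ opSNorm A (T - S) := opSNorm_nonneg
  rw [sInner_twoA_blk_self, sq_sNorm_twoA hA]
  -- with `w = x.fst + x.snd`, `d = x.fst - x.snd`: `‖w‖² ≤ ‖w‖² + ‖d‖²` and `2 ‖d‖ ‖w‖ ≤ ‖w‖² + ‖d‖²`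
  nlinarith [mul_nonneg ha (sq_nonneg (sNorm A (x.fst - x.snd))),
    mul_nonneg hb (sq_nonneg (sNorm A (x.fst + x.snd) - sNorm A (x.fst - x.snd)))]

end Block

theorem stmt8_general {H : Type*} [NormedAddCommGroup H] [InnerProductSpace ℂ H]
    (A : H →L[ℂ] H) (hA : A.IsPositive)
    (T S : H →L[ℂ] H) (hT : ABounded A T) (hS : ABounded A S) :
    numRad (twoA A) (blk T S T S) ≤ numRad A (T + S) + (1 / 2) * opSNorm A (T - S) := by
  refine Real.sSup_le ?_ (add_nonneg numRad_nonneg (mul_nonneg (by norm_num) opSNorm_nonneg))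
  rintro _ ⟨x, hx, rfl⟩
  simpa [hx] using norm_sInner_twoA_blk_le hA hT hS x

theorem stmt8 {H : Type*} [NormedAddCommGroup H] [InnerProductSpace ℂ H] [CompleteSpace H]
    (A : H →L[ℂ] H) (hA : A.IsPositive)
    (T S : H →L[ℂ] H) (hT : ABounded A T) (hS : ABounded A S)
    (hTadm : ∃ Ts : H →L[ℂ] H, A.comp Ts = (ContinuousLinearMap.adjoint T).comp A)
    (hSadm : ∃ Ss : H →L[ℂ] H, A.comp Ss = (ContinuousLinearMap.adjoint S).comp A) :
    numRad (twoA A) (blk T S T S) ≤ numRad A (T + S) + (1 / 2) * opSNorm A (T - S) :=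
  stmt8_general A hA T S hT hS
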